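/- Let n ≥ 4, F ⊆ {1,…,n} with 1 ∈ F, and a ∈ (ℤ/2ℤ)^F with a_1 = 1. Then there do not exist distinct g, g' ∈ L(n,F,a) such that g_1 + ⋯ + g_j = g'_2 + ⋯ + g'_j for every j with 2 ≤ j ≤ n−1 and |{1,…,j} ∖ F| odd. -/

import Mathlib

noncomputable section

open MvPolynomial Finset

/-- Bit strings of length `n` with coordinate sum zero (the index set `G_n`). -/
abbrev Gn (n : ℕ) : Type := {g : Fin n → ZMod 2 // ∑ i, g i = 0}

/-- The polynomial ring `R_n = ℂ[q_g : g ∈ G_n]`. -/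
abbrev Rn (n : ℕ) : Type := MvPolynomial (Gn n) ℂ

/-- The parameter polynomial ring, with variables `a^i_g = X (i, g)`. -/
abbrev Sn : Type := MvPolynomial (ℕ × ZMod 2) ℂ

/-- The partial sum `g_1 + ⋯ + g_j` (with `j` 1-based). -/
def psum1 {n : ℕ} (g : Fin n → ZMod 2) (j : ℕ) : ZMod 2 :=
  ∑ i ∈ univ.filter fun i : Fin n => (i : ℕ) < j, g i

/-- The partial sum `g_2 + ⋯ + g_j` (with `j` 1-based). -/
def psum2 {n : ℕ} (g : Fin n → ZMod 2) (j : ℕ) : ZMod 2 :=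
  ∑ i ∈ univ.filter fun i : Fin n => 0 < (i : ℕ) ∧ (i : ℕ) < j, g i

/-- The leaf-edge monomial `a^1_{g_1} ⋯ a^n_{g_n}`. -/
def leafMonom {n : ℕ} (g : Fin n → ZMod 2) : Sn :=
  ∏ j : Fin n, X ((j : ℕ) + 1, g j)

/-- `ψ_{T_0}(q_g) = (∏_{j=1}^n a^j_{g_j}) ∏_{j=1}^{n-1} a^{n+j}_{g_1+⋯+g_j}`. -/
def tree0Monom {n : ℕ} (g : Fin n → ZMod 2) : Sn :=
  leafMonom g * ∏ j ∈ Icc 1 (n - 1), X (n + j, psum1 g j)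

/-- `ψ_{T_1}(q_g) = (∏_{j=1}^n a^j_{g_j}) ∏_{j=2}^{n} a^{n+j}_{g_2+⋯+g_j}`. -/
def tree1Monom {n : ℕ} (g : Fin n → ZMod 2) : Sn :=
  leafMonom g * ∏ j ∈ Icc 2 n, X (n + j, psum2 g j)

/-- The parameterization of the first underlying tree of the `n`-sunlet. -/
def ψtree0 (n : ℕ) : Rn n →ₐ[ℂ] Sn := aeval fun g => tree0Monom g.1

/-- The parameterization of the second underlying tree of the `n`-sunlet. -/
def ψtree1 (n : ℕ) : Rn n →ₐ[ℂ] Sn := aeval fun g => tree1Monom g.1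

/-- The `n`-sunlet parameterization `ψ_n`. -/
def ψsunlet (n : ℕ) : Rn n →ₐ[ℂ] Sn := aeval fun g => tree0Monom g.1 + tree1Monom g.1

/-- The `n`-sunlet ideal `J_n = ker ψ_n`. -/
def Jsunlet (n : ℕ) : Ideal (Rn n) := RingHom.ker (ψsunlet n)

/-- The tree ideal `I_{T_0}`. -/
def Itree0 (n : ℕ) : Ideal (Rn n) := RingHom.ker (ψtree0 n)

/-- The tree ideal `I_{T_1}`. -/
def Itree1 (n : ℕ) : Ideal (Rn n) := RingHom.ker (ψtree1 n)

/-- The condition for `q_g q_h` to be a spanning monomial of the glove `G(n,F,a)`: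
`g` and `h` agree with `a` on `F`, and `g_i + h_i = 1` off `F`. -/
def GlovePair {n : ℕ} (F : Finset (Fin n)) (a : Fin n → ZMod 2) (g h : Gn n) : Prop :=
  (∀ i ∈ F, g.1 i = a i) ∧ (∀ i ∈ F, h.1 i = a i) ∧ ∀ i ∉ F, g.1 i + h.1 i = 1

instance {n : ℕ} (F : Finset (Fin n)) (a : Fin n → ZMod 2) (g h : Gn n) :
    Decidable (GlovePair F a g h) := by unfold GlovePair; infer_instance

/-- The glove `G(n,F,a)`, as a `ℂ`-subspace of `R_n`. -/
def glove {n : ℕ} (F : Finset (Fin n)) (a : Fin n → ZMod 2) : Submodule ℂ (Rn n) :=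
  Submodule.span ℂ {p | ∃ g h : Gn n, GlovePair F a g h ∧ p = X g * X h}

/-- Strict lexicographic order on bit strings. -/
def lexLt {n : ℕ} (g h : Fin n → ZMod 2) : Prop :=
  ∃ i : Fin n, (∀ j : Fin n, j < i → g j = h j) ∧ (g i).val < (h i).val

instance {n : ℕ} (g h : Fin n → ZMod 2) : Decidable (lexLt g h) := by
  unfold lexLt; infer_instance

/-- Non-strict lexicographic order on bit strings. -/
def lexLe {n : ℕ} (g h : Fin n → ZMod 2) : Prop := g = h ∨ lexLt g h

instance {n : ℕ} (g h : Fin n → ZMod 2) : Decidable (lexLe g h) := by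
  unfold lexLe; infer_instance

/-- Membership in `L(n,F,a)`: `g` is the lexicographically smaller index of a
spanning monomial `q_g q_h` of the glove `G(n,F,a)`. -/
def Lmem {n : ℕ} (F : Finset (Fin n)) (a : Fin n → ZMod 2) (g : Gn n) : Prop :=
  ∃ h : Gn n, GlovePair F a g h ∧ lexLe g.1 h.1

instance {n : ℕ} (F : Finset (Fin n)) (a : Fin n → ZMod 2) (g : Gn n) :
    Decidable (Lmem F a g) := by unfold Lmem; infer_instance

/-- The cardinality of `{1,…,j} ∖ F` (1-based `j`). -/
def cardInit {n : ℕ} (F : Finset (Fin n)) (j : ℕ) : ℕ :=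
  ((univ.filter fun i : Fin n => (i : ℕ) < j) \ F).card

/-- `𝔼(n,F) = {j : 2 ≤ j ≤ n-1, |{1,…,j} ∖ F| even}`. -/
def Eset (n : ℕ) (F : Finset (Fin n)) : Finset ℕ :=
  (Icc 2 (n - 1)).filter fun j => Even (cardInit F j)

/-- `𝕆(n,F) = {j : 2 ≤ j ≤ n-1, |{1,…,j} ∖ F| odd}`. -/
def Oset (n : ℕ) (F : Finset (Fin n)) : Finset ℕ :=
  (Icc 2 (n - 1)).filter fun j => Odd (cardInit F j)

/-- The general element of the glove `G(n,F,a)` with coefficient `c g` on the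
spanning monomial `q_g q_h` (where `g` is lexicographically smaller than `h`). -/
def gloveElt {n : ℕ} (F : Finset (Fin n)) (a : Fin n → ZMod 2) (c : Gn n → ℂ) : Rn n :=
  ∑ g : Gn n, ∑ h : Gn n,
    (if GlovePair F a g h ∧ lexLe g.1 h.1 then c g else 0) • (X g * X h : Rn n)

/-- `M_𝔼` vanishes on the glove element with coefficients `c`: each coordinate of the
image (indexed by an 𝔼-coloring) is the sum of the coefficients of the spanning
monomials with that 𝔼-coloring. -/
def MEkerCond {n : ℕ} (F : Finset (Fin n)) (a : Fin n → ZMod 2) (c : Gn n → ℂ) : Prop :=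
  ∀ v : ℕ → ZMod 2,
    (∑ g : Gn n, if Lmem F a g ∧ ∀ j ∈ Eset n F, psum1 g.1 j = v j then c g else 0) = 0

/-- `M_𝕆` vanishes on the glove element with coefficients `c`. -/
def MOkerCond {n : ℕ} (F : Finset (Fin n)) (a : Fin n → ZMod 2) (c : Gn n → ℂ) : Prop :=
  ∀ v : ℕ → ZMod 2,
    (∑ g : Gn n, if Lmem F a g ∧ ∀ j ∈ Oset n F, psum1 g.1 j = v j then c g else 0) = 0

/-!
Let `i₀` be the first position outside `F` (positions 1-based). A glove pair `q_g q_h` first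
differs at `i₀`, so the lexicographically smaller `g` has `g_{i₀} = 0`; hence any two elements
`g, g'` of `L(n,F,a)` agree up to `i₀`. As `{1,…,i₀} ∖ F = {i₀}`, the index `j = i₀` lies in
`𝕆(n,F)`: `j ≥ 2` because `1 ∈ F`, and `j ≤ n - 1` because `|Fᶜ| ≡ ∑ (g_i + h_i) = 0` is even, so
`Fᶜ` has a second element. Then `g_1 + ⋯ + g_j = g'_1 + ⋯ + g'_j = 1 + (g'_2 + ⋯ + g'_j)`.
-/

section

variable {n : ℕ} {F : Finset (Fin n)} {a : Fin n → ZMod 2}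

theorem apply_eq_zero_of_lexLe {g h : Fin n → ZMod 2} (hle : lexLe g h) {i : Fin n}
    (hne : g i ≠ h i) (hbelow : ∀ j < i, g j = h j) : g i = 0 := by
  rcases hle with rfl | ⟨k, hk, hlt⟩
  · exact absurd rfl hne
  obtain rfl : k = i := by
    rcases lt_trichotomy k i with hki | rfl | hik
    · exact absurd (hbelow k hki) fun h => by rw [h] at hlt; exact hlt.false
    · rfl
    · exact absurd (hk i hik) hne
  have := ZMod.val_lt (h k)
  exact (ZMod.val_eq_zero _).mp (by omega)

namespace GlovePair

variable {g h : Gn n}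

theorem apply_eq_of_mem (hgh : GlovePair F a g h) {i : Fin n} (hi : i ∈ F) : g.1 i = h.1 i :=
  (hgh.1 i hi).trans (hgh.2.1 i hi).symm

theorem apply_ne_of_notMem (hgh : GlovePair F a g h) {i : Fin n} (hi : i ∉ F) :
    g.1 i ≠ h.1 i := fun heq => by
  have := hgh.2.2 i hi
  rw [heq, CharTwo.add_self_eq_zero] at this
  exact zero_ne_one this

theorem even_card_compl (hgh : GlovePair F a g h) : Even Fᶜ.card := by
  have hsum : ∑ i ∈ Fᶜ, (g.1 i + h.1 i) = ∑ i, (g.1 i + h.1 i) :=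
    sum_subset (subset_univ _) fun i _ hi => by
      rw [hgh.apply_eq_of_mem (by simpa using hi), CharTwo.add_self_eq_zero]
  rw [sum_congr rfl fun i hi => hgh.2.2 i (mem_compl.mp hi), sum_add_distrib, g.2, h.2,
    sum_const, nsmul_one, add_zero] at hsum
  exact ZMod.natCast_eq_zero_iff_even.mp hsum

end GlovePair

namespace Lmem

variable {g : Gn n}

theorem apply_of_mem (hg : Lmem F a g) {i : Fin n} (hi : i ∈ F) : g.1 i = a i := by
  obtain ⟨_, hgh, -⟩ := hg
  exact hgh.1 i hi

theorem even_card_compl (hg : Lmem F a g) : Even Fᶜ.card := by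
  obtain ⟨_, hgh, -⟩ := hg
  exact hgh.even_card_compl

theorem apply_min'_compl_eq_zero (hg : Lmem F a g) (hC : Fᶜ.Nonempty) :
    g.1 (Fᶜ.min' hC) = 0 := by
  obtain ⟨h, hgh, hle⟩ := hg
  refine apply_eq_zero_of_lexLe hle (hgh.apply_ne_of_notMem (mem_compl.mp (min'_mem _ hC)))
    fun j hj => hgh.apply_eq_of_mem ?_
  by_contra hjF
  exact (min'_le _ j (mem_compl.mpr hjF)).not_gt hj

end Lmem

theorem psum1_congr {g g' : Fin n → ZMod 2} {j : ℕ} (h : ∀ i : Fin n, (i : ℕ) < j → g i = g' i) :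
    psum1 g j = psum1 g' j :=
  sum_congr rfl fun i hi => h i (mem_filter.mp hi).2

theorem psum1_eq_add_psum2 (hn : 0 < n) (g : Fin n → ZMod 2) {j : ℕ} (hj : 0 < j) :
    psum1 g j = g ⟨0, hn⟩ + psum2 g j := by
  rw [psum1, psum2, ← add_sum_erase _ _ (mem_filter.mpr ⟨mem_univ (⟨0, hn⟩ : Fin n), hj⟩)]
  congr 1
  refine sum_congr ?_ fun _ _ => rfl
  ext i
  simp [Fin.ext_iff, Nat.pos_iff_ne_zero]

theorem cardInit_min'_compl_add_one (hC : Fᶜ.Nonempty) :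
    cardInit F ((Fᶜ.min' hC : ℕ) + 1) = 1 := by
  rw [cardInit, card_eq_one]
  refine ⟨Fᶜ.min' hC, ?_⟩
  ext i
  simp only [mem_sdiff, mem_filter, mem_univ, true_and, mem_singleton]
  constructor
  · rintro ⟨hi, hiF⟩
    exact le_antisymm (Fin.le_iff_val_le_val.mpr (by omega)) (min'_le _ _ (mem_compl.mpr hiF))
  · rintro rfl
    exact ⟨Nat.lt_succ_self _, mem_compl.mp (min'_mem _ _)⟩

theorem min'_compl_add_one_mem_Oset (hn : 0 < n) (h0 : (⟨0, hn⟩ : Fin n) ∈ F)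
    (hC : Fᶜ.Nonempty) (htwo : 1 < Fᶜ.card) : (Fᶜ.min' hC : ℕ) + 1 ∈ Oset n F := by
  obtain ⟨i₁, hi₁, hne⟩ := exists_mem_ne htwo (Fᶜ.min' hC)
  have hlt : (Fᶜ.min' hC : ℕ) < i₁ := (min'_le _ _ hi₁).lt_of_ne hne.symm
  have hpos : (Fᶜ.min' hC : ℕ) ≠ 0 := fun h =>
    mem_compl.mp (min'_mem _ hC) (by rwa [show Fᶜ.min' hC = ⟨0, hn⟩ from Fin.ext h])
  rw [Oset, mem_filter, mem_Icc, cardInit_min'_compl_add_one]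
  have := i₁.isLt
  exact ⟨⟨by omega, by omega⟩, odd_one⟩

end

/-- Lemma 4.17: when leaf 1 is in `F` with `a_1 = 1`, there are no distinct
`g, g' ∈ L(n,F,a)` with `g_1 + ⋯ + g_j = g'_2 + ⋯ + g'_j` for every `j ∈ 𝕆(n,F)`. -/
theorem no_shifted_partial_sum_collision (n : ℕ) (hn : 4 ≤ n)
    (F : Finset (Fin n)) (a : Fin n → ZMod 2)
    (h1 : (⟨0, by omega⟩ : Fin n) ∈ F) (ha : a ⟨0, by omega⟩ = 1) :
    ¬∃ g g' : Gn n, Lmem F a g ∧ Lmem F a g' ∧ g ≠ g' ∧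
      ∀ j ∈ Oset n F, psum1 g.1 j = psum2 g'.1 j := by
  rintro ⟨g, g', hg, hg', hne, hcoll⟩
  have hagree_F : ∀ i ∈ F, g.1 i = g'.1 i := fun i hi =>
    (hg.apply_of_mem hi).trans (hg'.apply_of_mem hi).symm
  rcases Fᶜ.eq_empty_or_nonempty with hC | hC
  · rw [compl_eq_empty_iff] at hC
    exact hne (Subtype.ext (funext fun i => hagree_F i (hC ▸ mem_univ i)))
  set i₀ := Fᶜ.min' hC
  have htwo : 1 < Fᶜ.card := by
    obtain ⟨k, hk⟩ := hg.even_card_compl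
    have := card_pos.mpr hC
    omega
  have hagree : psum1 g.1 (i₀ + 1) = psum1 g'.1 (i₀ + 1) := psum1_congr fun i hi => by
    by_cases hiF : i ∈ F
    · exact hagree_F i hiF
    obtain rfl : i = i₀ :=
      le_antisymm (Fin.le_iff_val_le_val.mpr (by omega)) (min'_le _ _ (mem_compl.mpr hiF))
    rw [hg.apply_min'_compl_eq_zero, hg'.apply_min'_compl_eq_zero]
  have h := hcoll _ (min'_compl_add_one_mem_Oset (by omega) h1 hC htwo)
  rw [hagree, psum1_eq_add_psum2 (by omega) _ (Nat.succ_pos _), hg'.apply_of_mem h1, ha,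
    add_eq_right] at h
  exact one_ne_zero h
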